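/- Let X be a normed space, C ⊆ X a nonempty convex bounded subset with diameter d_C, T : C → C nonexpansive, and (λ_n)_{n≥1} ⊆ [0,1] with rate of convergence α of λ_n → 0, Cauchy modulus β of ∑_{i=1}^n |λ_{i+1}-λ_i|, and rate of divergence θ of ∑ λ_n. Then for every x ∈ C, lim ‖x_n - Tx_n‖ = 0 for the Halpern iteration (x_n), and for any M ∈ ℕ* with M ≥ 3·d_C, for all ε ∈ (0,2) and all n ≥ max{ θ(β(ε/(8M)) + 1 + ⌈ln(8M/ε)⌉), α(ε/(4M)) }, we have ‖x_n - T x_n‖ < ε. -/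

import Mathlib

/-!
With `d` a bound on the diameter of `C`, the differences `aₙ = ‖xₙ₊₁ - xₙ‖` satisfy
`aₙ₊₁ ≤ (1 - λₙ₊₂) aₙ + d |λₙ₊₂ - λₙ₊₁|`. Unrolling this from `s = β (ε / 8M)` and using
`1 - t ≤ exp (-t)` bounds `aₙ` by `exp (-∑ λ) d` plus `d` times a tail of `∑ |λᵢ₊₁ - λᵢ|`:
`θ` makes the first term small and `β` the second. Finally `‖xₙ - T xₙ‖ ≤ aₙ + λₙ₊₁ d`,
and `α` makes the last term small.
-/

open Finset

theorem prod_one_sub_le_exp_neg_sum {ι : Type*} (s : Finset ι) {f : ι → ℝ}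
    (hf : ∀ i ∈ s, f i ≤ 1) : ∏ i ∈ s, (1 - f i) ≤ Real.exp (-∑ i ∈ s, f i) := by
  rw [← sum_neg_distrib, Real.exp_sum]
  exact prod_le_prod (fun i hi => sub_nonneg.2 (hf i hi)) fun i _ => Real.one_sub_le_exp_neg _

theorem le_prod_one_sub_mul_add_sum {a μ c : ℕ → ℝ} (hμ0 : ∀ k, 0 ≤ μ k) (hμ1 : ∀ k, μ k ≤ 1)
    (hc : ∀ k, 0 ≤ c k) (h : ∀ k, a (k + 1) ≤ (1 - μ (k + 1)) * a k + c (k + 1))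
    {s n : ℕ} (hsn : s ≤ n) :
    a n ≤ (∏ i ∈ Ioc s n, (1 - μ i)) * a s + ∑ i ∈ Ioc s n, c i := by
  induction n, hsn using Nat.le_induction with
  | base => simp
  | succ n hsn ih =>
    rw [prod_Ioc_succ_top hsn, sum_Ioc_succ_top hsn]
    have hsum : 0 ≤ ∑ i ∈ Ioc s n, c i := sum_nonneg fun i _ => hc i
    calc a (n + 1) ≤ (1 - μ (n + 1)) * a n + c (n + 1) := h n
      _ ≤ (1 - μ (n + 1)) * ((∏ i ∈ Ioc s n, (1 - μ i)) * a s + ∑ i ∈ Ioc s n, c i)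
          + c (n + 1) := by gcongr; linarith [hμ1 (n + 1)]
      _ ≤ _ := by nlinarith [mul_nonneg (hμ0 (n + 1)) hsum]

theorem sum_Icc_one_sub_sum_Icc_one {f : ℕ → ℝ} {s n : ℕ} (hsn : s ≤ n) :
    ∑ i ∈ Icc 1 n, f i - ∑ i ∈ Icc 1 s, f i = ∑ i ∈ Ioc s n, f i := by
  rw [sub_eq_iff_eq_add', show Icc 1 n = Ioc 0 n from Icc_add_one_left_eq_Ioc 0 n,
    show Icc 1 s = Ioc 0 s from Icc_add_one_left_eq_Ioc 0 s,
    sum_Ioc_consecutive _ s.zero_le hsn]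

theorem lt_and_le_sum_Ioc_add_one {f : ℕ → ℝ} (hf : ∀ i ≥ 1, f i ∈ Set.Icc (0 : ℝ) 1)
    {s n : ℕ} {L : ℝ} (hL : 0 ≤ L) (h : s + 1 + L ≤ ∑ i ∈ Icc 1 n, f i) :
    s < n ∧ L ≤ ∑ i ∈ Ioc s n, f (i + 1) := by
  have hle_card : ∀ m, ∑ i ∈ Icc 1 m, f i ≤ m := fun m => by
    simpa using sum_le_card_nsmul (Icc 1 m) f 1 fun i hi => (hf i (mem_Icc.1 hi).1).2
  have hsn : s < n := by exact_mod_cast (by linarith [hle_card n] : (s : ℝ) < n)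
  have hshift : ∑ i ∈ Ioc s n, f (i + 1) = ∑ i ∈ Ioc (s + 1) (n + 1), f i := by
    rw [← map_add_right_Ioc, sum_map]; rfl
  have hstep : ∑ i ∈ Icc 1 n, f i ≤ ∑ i ∈ Icc 1 (n + 1), f i := by
    rw [sum_Icc_succ_top (by omega)]
    linarith [(hf (n + 1) n.succ_pos).1]
  have hsplit := sum_Icc_one_sub_sum_Icc_one (f := f) (Nat.succ_le_succ hsn.le)
  have hhead := hle_card (s + 1)
  push_cast at hhead
  exact ⟨hsn, by linarith⟩

section Halpern

variable {X : Type*} [NormedAddCommGroup X] [NormedSpace ℝ X] {C : Set X} {T : X → X}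
  {lam : ℕ → ℝ} {x₀ : X} {x : ℕ → X}

theorem halpern_mem (hconv : Convex ℝ C) (hTmaps : Set.MapsTo T C C)
    (hlam : ∀ n ≥ 1, lam n ∈ Set.Icc (0 : ℝ) 1) (hx₀ : x₀ ∈ C) (hx0 : x 0 = x₀)
    (hrec : ∀ n : ℕ, x (n + 1) = lam (n + 1) • x₀ + (1 - lam (n + 1)) • T (x n)) (n : ℕ) :
    x n ∈ C := by
  induction n with
  | zero => exact hx0 ▸ hx₀
  | succ n ih =>
    obtain ⟨h0, h1⟩ := hlam (n + 1) n.succ_pos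
    exact hrec n ▸ hconv hx₀ (hTmaps ih) h0 (sub_nonneg.2 h1) (add_sub_cancel _ _)

theorem halpern_norm_succ_sub_le_rec (hT : ∀ u ∈ C, ∀ v ∈ C, ‖T u - T v‖ ≤ ‖u - v‖)
    (hxC : ∀ n, x n ∈ C)
    (hrec : ∀ n : ℕ, x (n + 1) = lam (n + 1) • x₀ + (1 - lam (n + 1)) • T (x n))
    {D : ℝ} {k : ℕ} (hD : ‖x₀ - T (x k)‖ ≤ D) (hlam : lam (k + 2) ≤ 1) :
    ‖x (k + 2) - x (k + 1)‖ ≤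
      (1 - lam (k + 2)) * ‖x (k + 1) - x k‖ + D * |lam (k + 2) - lam (k + 1)| := by
  have hid : x (k + 2) - x (k + 1) = (lam (k + 2) - lam (k + 1)) • (x₀ - T (x k))
      + (1 - lam (k + 2)) • (T (x (k + 1)) - T (x k)) := by
    rw [hrec (k + 1), hrec k]; module
  calc ‖x (k + 2) - x (k + 1)‖
      ≤ |lam (k + 2) - lam (k + 1)| * ‖x₀ - T (x k)‖
        + (1 - lam (k + 2)) * ‖T (x (k + 1)) - T (x k)‖ := by
        rw [hid, ← norm_smul_of_nonneg (sub_nonneg.2 hlam), ← Real.norm_eq_abs, ← norm_smul]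
        exact norm_add_le _ _
    _ ≤ |lam (k + 2) - lam (k + 1)| * D + (1 - lam (k + 2)) * ‖x (k + 1) - x k‖ := by
        gcongr
        exact hT _ (hxC (k + 1)) _ (hxC k)
    _ = _ := by ring

theorem halpern_norm_sub_apply_le
    (hrec : ∀ n : ℕ, x (n + 1) = lam (n + 1) • x₀ + (1 - lam (n + 1)) • T (x n))
    {D : ℝ} {n : ℕ} (hD : ‖x₀ - T (x n)‖ ≤ D) (hlam : 0 ≤ lam (n + 1)) :
    ‖x n - T (x n)‖ ≤ ‖x (n + 1) - x n‖ + lam (n + 1) * D := by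
  have hkey : x (n + 1) - T (x n) = lam (n + 1) • (x₀ - T (x n)) := by rw [hrec n]; module
  calc ‖x n - T (x n)‖ = ‖(x (n + 1) - T (x n)) - (x (n + 1) - x n)‖ := by congr 1; abel
    _ ≤ ‖x (n + 1) - T (x n)‖ + ‖x (n + 1) - x n‖ := norm_sub_le _ _
    _ ≤ lam (n + 1) * D + ‖x (n + 1) - x n‖ := by
        rw [hkey, norm_smul_of_nonneg hlam]; gcongr
    _ = _ := add_comm _ _

theorem halpern_norm_succ_sub_le_exp (hTmaps : Set.MapsTo T C C)
    (hT : ∀ u ∈ C, ∀ v ∈ C, ‖T u - T v‖ ≤ ‖u - v‖)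
    (hlam : ∀ n ≥ 1, lam n ∈ Set.Icc (0 : ℝ) 1) (hx₀ : x₀ ∈ C) (hxC : ∀ n, x n ∈ C)
    (hrec : ∀ n : ℕ, x (n + 1) = lam (n + 1) • x₀ + (1 - lam (n + 1)) • T (x n))
    {D : ℝ} (hD : ∀ u ∈ C, ∀ v ∈ C, ‖u - v‖ ≤ D) {s n : ℕ} (hsn : s ≤ n) :
    ‖x (n + 1) - x n‖ ≤ Real.exp (-∑ i ∈ Ioc s n, lam (i + 1)) * D
      + D * ∑ i ∈ Ioc s n, |lam (i + 1) - lam i| := by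
  have hD0 : 0 ≤ D := (norm_nonneg _).trans (hD _ hx₀ _ hx₀)
  have hlam1 : ∀ k, lam (k + 1) ≤ 1 := fun k => (hlam (k + 1) k.succ_pos).2
  have hunroll := le_prod_one_sub_mul_add_sum (a := fun k => ‖x (k + 1) - x k‖)
    (μ := fun i => lam (i + 1)) (c := fun i => D * |lam (i + 1) - lam i|)
    (fun k => (hlam (k + 1) k.succ_pos).1) hlam1 (fun k => by positivity)
    (fun k => halpern_norm_succ_sub_le_rec hT hxC hrec (hD _ hx₀ _ (hTmaps (hxC k))) (hlam1 _))
    hsn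
  rw [← mul_sum] at hunroll
  refine hunroll.trans (add_le_add_left (mul_le_mul ?_ (hD _ (hxC _) _ (hxC _))
    (norm_nonneg _) (Real.exp_pos _).le) _)
  exact prod_one_sub_le_exp_neg_sum _ fun i _ => hlam1 i

theorem halpern_norm_sub_apply_lt (hTmaps : Set.MapsTo T C C)
    (hT : ∀ u ∈ C, ∀ v ∈ C, ‖T u - T v‖ ≤ ‖u - v‖)
    (hlam : ∀ n ≥ 1, lam n ∈ Set.Icc (0 : ℝ) 1) {α : ℝ → ℕ}
    (hα : ∀ ε > (0 : ℝ), ∀ n : ℕ, α ε ≤ n → |lam n| < ε) {β : ℝ → ℕ}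
    (hβ : ∀ ε > (0 : ℝ), ∀ n : ℕ, 1 ≤ n →
      (∑ i ∈ Icc 1 (β ε + n), |lam (i + 1) - lam i|)
        - (∑ i ∈ Icc 1 (β ε), |lam (i + 1) - lam i|) < ε)
    {θ : ℕ → ℕ} (hθ : ∀ n : ℕ, 1 ≤ n → (n : ℝ) ≤ ∑ i ∈ Icc 1 (θ n), lam i)
    (hx₀ : x₀ ∈ C) (hxC : ∀ n, x n ∈ C)
    (hrec : ∀ n : ℕ, x (n + 1) = lam (n + 1) • x₀ + (1 - lam (n + 1)) • T (x n))
    {M : ℕ} (hM : 1 ≤ M) (hMC : ∀ u ∈ C, 3 * ‖u‖ ≤ (M : ℝ)) {ε : ℝ} (hε : 0 < ε) {n : ℕ}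
    (hn : max (θ (β (ε / (8 * M)) + 1 + ⌈Real.log (8 * M / ε)⌉₊)) (α (ε / (4 * M))) ≤ n) :
    ‖x n - T (x n)‖ < ε := by
  set δ := ε / (8 * M)
  set s := β δ
  set L := ⌈Real.log (8 * M / ε)⌉₊
  have hMpos : (0 : ℝ) < M := by exact_mod_cast hM
  have hδ : 0 < δ := by positivity
  have hD : ∀ u ∈ C, ∀ v ∈ C, ‖u - v‖ ≤ 2 * M / 3 := fun u hu v hv => by
    linarith [norm_sub_le u v, hMC u hu, hMC v hv]
  have hlam0 : ∀ i ≥ 1, 0 ≤ lam i := fun i hi => (hlam i hi).1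
  have hsum_lam : (s + 1 + L : ℝ) ≤ ∑ i ∈ Icc 1 n, lam i := by
    calc (s + 1 + L : ℝ) ≤ ∑ i ∈ Icc 1 (θ (s + 1 + L)), lam i := by
          exact_mod_cast hθ _ (by omega)
      _ ≤ _ := sum_le_sum_of_subset_of_nonneg
          (Icc_subset_Icc_right ((le_max_left _ _).trans hn))
          fun i hi _ => hlam0 i (mem_Icc.1 hi).1
  obtain ⟨hsn, htail⟩ := lt_and_le_sum_Ioc_add_one hlam L.cast_nonneg hsum_lam
  have hexp : Real.exp (-∑ i ∈ Ioc s n, lam (i + 1)) ≤ δ := calc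
    _ ≤ Real.exp (-Real.log (8 * M / ε)) := Real.exp_le_exp.2 <| neg_le_neg <|
        (Nat.le_ceil _).trans htail
    _ = δ := by rw [Real.exp_neg, Real.exp_log (by positivity), inv_div]
  have hvar : ∑ i ∈ Ioc s n, |lam (i + 1) - lam i| < δ := by
    have := hβ δ hδ (n - s) (by omega)
    rwa [Nat.add_sub_cancel' hsn.le, sum_Icc_one_sub_sum_Icc_one hsn.le] at this
  have hlam_n : lam (n + 1) < ε / (4 * M) := by
    have := hα _ (by positivity) (n + 1) (((le_max_right _ _).trans hn).trans n.le_succ)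
    rwa [abs_of_nonneg (hlam0 _ n.succ_pos)] at this
  have hdiff := halpern_norm_succ_sub_le_exp hTmaps hT hlam hx₀ hxC hrec hD hsn.le
  have hfix := halpern_norm_sub_apply_le hrec (hD _ hx₀ _ (hTmaps (hxC n))) (hlam0 _ n.succ_pos)
  have hD0 : (0 : ℝ) < 2 * M / 3 := by positivity
  have h1 := mul_le_mul_of_nonneg_right hexp hD0.le
  have h2 := mul_lt_mul_of_pos_left hvar hD0
  have h3 := mul_lt_mul_of_pos_right hlam_n hD0
  have hsum : δ * (2 * M / 3) + 2 * M / 3 * δ + ε / (4 * M) * (2 * M / 3) = ε / 3 := by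
    simp only [δ]; field_simp; ring
  linarith

end Halpern

theorem halpern_rate_bounded_C_general
    {X : Type*} [NormedAddCommGroup X] [NormedSpace ℝ X]
    (C : Set X) (hconv : Convex ℝ C)
    (hCbdd : Bornology.IsBounded C)
    (T : X → X) (hTmaps : Set.MapsTo T C C)
    (hT : ∀ u ∈ C, ∀ v ∈ C, ‖T u - T v‖ ≤ ‖u - v‖)
    (lam : ℕ → ℝ) (hlam : ∀ n ≥ 1, lam n ∈ Set.Icc (0:ℝ) 1)
    (α : ℝ → ℕ)
    (hα : ∀ ε > (0:ℝ), ∀ n : ℕ, α ε ≤ n → |lam n| < ε)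
    (β : ℝ → ℕ)
    (hβ : ∀ ε > (0:ℝ), ∀ n : ℕ, 1 ≤ n →
      (∑ i ∈ Finset.Icc 1 (β ε + n), |lam (i + 1) - lam i|)
        - (∑ i ∈ Finset.Icc 1 (β ε), |lam (i + 1) - lam i|) < ε)
    (θ : ℕ → ℕ)
    (hθ : ∀ n : ℕ, 1 ≤ n → (n : ℝ) ≤ ∑ i ∈ Finset.Icc 1 (θ n), lam i)
    (x₀ : X) (hx₀ : x₀ ∈ C) (x : ℕ → X) (hx0 : x 0 = x₀)
    (hrec : ∀ n : ℕ, x (n + 1) = lam (n + 1) • x₀ + (1 - lam (n + 1)) • T (x n)) :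
    Filter.Tendsto (fun n => ‖x n - T (x n)‖) Filter.atTop (nhds 0) ∧
    ∀ M : ℕ, 1 ≤ M → (∀ u ∈ C, 3 * ‖u‖ ≤ (M : ℝ)) →
      ∀ ε : ℝ, 0 < ε → ε < 2 →
        ∀ n : ℕ,
          max (θ (β (ε / (8 * M)) + 1 + ⌈Real.log (8 * M / ε)⌉₊)) (α (ε / (4 * M))) ≤ n →
          ‖x n - T (x n)‖ < ε := by
  have hxC := halpern_mem hconv hTmaps hlam hx₀ hx0 hrec
  refine ⟨?_, fun M hM hMC ε hε _ n hn =>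
    halpern_norm_sub_apply_lt hTmaps hT hlam hα hβ hθ hx₀ hxC hrec hM hMC hε hn⟩
  obtain ⟨R, hR⟩ := isBounded_iff_forall_norm_le.mp hCbdd
  obtain ⟨M, hM⟩ := exists_nat_ge (3 * R)
  have hMC : ∀ u ∈ C, 3 * ‖u‖ ≤ ((M + 1 : ℕ) : ℝ) := fun u hu => by
    push_cast; linarith [hR u hu]
  refine NormedAddGroup.tendsto_nhds_zero.2 fun ε hε => ?_
  simp only [norm_norm]
  exact Filter.eventually_atTop.2 ⟨_, fun n hn =>
    halpern_norm_sub_apply_lt hTmaps hT hlam hα hβ hθ hx₀ hxC hrec (Nat.le_add_left 1 M) hMC hε hn⟩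

theorem halpern_rate_bounded_C
    {X : Type*} [NormedAddCommGroup X] [NormedSpace ℝ X]
    (C : Set X) (hC : C.Nonempty) (hconv : Convex ℝ C)
    (hCbdd : Bornology.IsBounded C)
    (T : X → X) (hTmaps : Set.MapsTo T C C)
    (hT : ∀ u ∈ C, ∀ v ∈ C, ‖T u - T v‖ ≤ ‖u - v‖)
    (lam : ℕ → ℝ) (hlam : ∀ n ≥ 1, lam n ∈ Set.Icc (0:ℝ) 1)
    (α : ℝ → ℕ) (hαpos : ∀ ε > (0:ℝ), 1 ≤ α ε)
    (hα : ∀ ε > (0:ℝ), ∀ n : ℕ, α ε ≤ n → |lam n| < ε)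
    (β : ℝ → ℕ) (hβpos : ∀ ε > (0:ℝ), 1 ≤ β ε)
    (hβ : ∀ ε > (0:ℝ), ∀ n : ℕ, 1 ≤ n →
      (∑ i ∈ Finset.Icc 1 (β ε + n), |lam (i + 1) - lam i|)
        - (∑ i ∈ Finset.Icc 1 (β ε), |lam (i + 1) - lam i|) < ε)
    (θ : ℕ → ℕ) (hθpos : ∀ n : ℕ, 1 ≤ n → 1 ≤ θ n)
    (hθ : ∀ n : ℕ, 1 ≤ n → (n : ℝ) ≤ ∑ i ∈ Finset.Icc 1 (θ n), lam i)
    (x₀ : X) (hx₀ : x₀ ∈ C) (x : ℕ → X) (hx0 : x 0 = x₀)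
    (hrec : ∀ n : ℕ, x (n + 1) = lam (n + 1) • x₀ + (1 - lam (n + 1)) • T (x n)) :
    Filter.Tendsto (fun n => ‖x n - T (x n)‖) Filter.atTop (nhds 0) ∧
    ∀ M : ℕ, 1 ≤ M → (∀ u ∈ C, 3 * ‖u‖ ≤ (M : ℝ)) →
      ∀ ε : ℝ, 0 < ε → ε < 2 →
        ∀ n : ℕ,
          max (θ (β (ε / (8 * M)) + 1 + ⌈Real.log (8 * M / ε)⌉₊)) (α (ε / (4 * M))) ≤ n →
          ‖x n - T (x n)‖ < ε :=
  halpern_rate_bounded_C_general C hconv hCbdd T hTmaps hT lam hlam α hα β hβ θ hθ x₀ hx₀ x hx0 hrec
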